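/- Let A ∈ ℝ^{p×T}, B ∈ ℝ^{q×T} with [A; B] of full row rank p+q. Then the matrix I_p − A (B)† B A† is invertible, and D₁ := (I_T − B†B) A† (I_p − A B† B A†)⁻¹ satisfies A D₁ = I_p and B D₁ = 0. -/

import Mathlib

open Matrix

noncomputable def rpinv {m n : Type} [Fintype m] [Fintype n] [DecidableEq m]
    (A : Matrix m n ℝ) : Matrix n m ℝ := Aᵀ * (A * Aᵀ)⁻¹

/-!
Full row rank of `[A; B]` means that `x A + y B = 0` forces `x = y = 0`. Hence `A`, `B` and
`C := A (I − B†B)` have full row rank, so `A A† = I`, `B B† = I` and `C Cᵀ` is invertible.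
Since `I − B†B` is a symmetric idempotent,
`I − A B† B A† = A (I − B†B) A† = C Cᵀ (A Aᵀ)⁻¹` is invertible, and then `A D₁ = I`,
while `B D₁ = 0` because `B (I − B†B) = 0`.
-/

namespace Matrix

section FullRowRank

variable {m n l : Type*} [Fintype m] [Fintype l]

theorem rank_eq_card_iff_vecMul_injective {K : Type*} [Field K] [Fintype n] (M : Matrix m n K) :
    M.rank = Fintype.card m ↔ Function.Injective M.vecMul := by
  rw [vecMul_injective_iff, linearIndependent_iff_card_eq_finrank_span, Set.finrank,
    ← rank_eq_finrank_span_row, eq_comm]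

theorem isUnit_mul_transpose_of_vecMul_injective {K : Type*} [Field K] [LinearOrder K]
    [IsStrictOrderedRing K] [Fintype n] [DecidableEq m] {M : Matrix m n K}
    (hM : Function.Injective M.vecMul) : IsUnit (M * Mᵀ) := by
  rw [← vecMul_injective_iff_isUnit, ← rank_eq_card_iff_vecMul_injective,
    rank_self_mul_transpose, rank_eq_card_iff_vecMul_injective]
  exact hM

variable {R : Type*} [Ring R] {A : Matrix m n R} {B : Matrix l n R}

theorem vecMul_injective_left_of_fromRows (h : Function.Injective (fromRows A B).vecMul) :
    Function.Injective A.vecMul := by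
  intro x y hxy
  have : (fromRows A B).vecMul (Sum.elim x 0) = (fromRows A B).vecMul (Sum.elim y 0) := by
    simpa using hxy
  simpa using congr_arg (fun z => z ∘ Sum.inl) (h this)

theorem vecMul_injective_right_of_fromRows (h : Function.Injective (fromRows A B).vecMul) :
    Function.Injective B.vecMul := by
  intro x y hxy
  have : (fromRows A B).vecMul (Sum.elim 0 x) = (fromRows A B).vecMul (Sum.elim 0 y) := by
    simpa using hxy
  simpa using congr_arg (fun z => z ∘ Sum.inr) (h this)

theorem eq_zero_of_vecMul_eq_vecMul_of_fromRows (h : Function.Injective (fromRows A B).vecMul)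
    {x : m → R} {y : l → R} (hxy : x ᵥ* A = y ᵥ* B) : x = 0 := by
  have : (fromRows A B).vecMul (Sum.elim x (-y)) = (fromRows A B).vecMul 0 := by
    simp [hxy, neg_vecMul]
  simpa using congr_arg (fun z => z ∘ Sum.inl) (h this)

end FullRowRank

end Matrix

section Rpinv

variable {m n l : Type} [Fintype m] [Fintype n] [Fintype l]

theorem mul_rpinv_of_vecMul_injective [DecidableEq m] {A : Matrix m n ℝ}
    (hA : Function.Injective A.vecMul) : A * rpinv A = 1 := by
  rw [rpinv, ← Matrix.mul_assoc,
    mul_nonsing_inv _ ((isUnit_iff_isUnit_det _).mp (isUnit_mul_transpose_of_vecMul_injective hA))]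

theorem transpose_rpinv_mul_self [DecidableEq l] (B : Matrix l n ℝ) :
    (rpinv B * B)ᵀ = rpinv B * B := by
  rw [rpinv, transpose_mul, transpose_mul, transpose_nonsing_inv, transpose_mul,
    transpose_transpose, Matrix.mul_assoc]

variable [DecidableEq n] [DecidableEq l] {B : Matrix l n ℝ}

theorem mul_one_sub_rpinv_mul_self (hB : B * rpinv B = 1) : B * (1 - rpinv B * B) = 0 := by
  rw [Matrix.mul_sub, Matrix.mul_one, ← Matrix.mul_assoc, hB, Matrix.one_mul, sub_self]

theorem one_sub_rpinv_mul_self_mul_transpose (hB : B * rpinv B = 1) :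
    (1 - rpinv B * B) * (1 - rpinv B * B)ᵀ = 1 - rpinv B * B := by
  have hQ : rpinv B * B * (rpinv B * B) = rpinv B * B := by
    rw [Matrix.mul_assoc, ← Matrix.mul_assoc B, hB, Matrix.one_mul]
  rw [transpose_sub, transpose_one, transpose_rpinv_mul_self, Matrix.sub_mul, Matrix.one_mul,
    Matrix.mul_sub, Matrix.mul_one, hQ, sub_self, sub_zero]

variable {A : Matrix m n ℝ}

theorem vecMul_injective_mul_one_sub_rpinv_mul_self
    (h : Function.Injective (fromRows A B).vecMul) :
    Function.Injective (A * (1 - rpinv B * B)).vecMul := by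
  intro x y hxy
  rw [← sub_eq_zero]
  apply eq_zero_of_vecMul_eq_vecMul_of_fromRows h (y := (x - y) ᵥ* (A * rpinv B))
  -- `z (A (I − B†B)) = 0` says `z A = (z A B†) B`
  have : (x - y) ᵥ* (A * (1 - rpinv B * B)) = 0 := by
    rw [sub_vecMul, sub_eq_zero]
    exact hxy
  rwa [Matrix.mul_sub, Matrix.mul_one, vecMul_sub, sub_eq_zero, ← Matrix.mul_assoc,
    ← vecMul_vecMul] at this

theorem isUnit_mul_one_sub_rpinv_mul_self_mul_rpinv [DecidableEq m]
    (h : Function.Injective (fromRows A B).vecMul) :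
    IsUnit (A * (1 - rpinv B * B) * rpinv A) := by
  set C := A * (1 - rpinv B * B)
  have hC : C * Cᵀ = A * (1 - rpinv B * B) * Aᵀ := by
    rw [transpose_mul, Matrix.mul_assoc, ← Matrix.mul_assoc (1 - rpinv B * B),
      one_sub_rpinv_mul_self_mul_transpose
        (mul_rpinv_of_vecMul_injective (vecMul_injective_right_of_fromRows h)),
      ← Matrix.mul_assoc]
  rw [rpinv, ← Matrix.mul_assoc, ← hC]
  exact (isUnit_mul_transpose_of_vecMul_injective
    (vecMul_injective_mul_one_sub_rpinv_mul_self h)).mul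
    ((isUnit_nonsing_inv_iff).mpr
      (isUnit_mul_transpose_of_vecMul_injective (vecMul_injective_left_of_fromRows h)))

end Rpinv

/-- Explicit formula for the first block of `[A;B]†`: if `[A;B]` has full row rank,
then `I − A B† B A†` is invertible and
`D₁ = (I − B†B) A† (I − A B† B A†)⁻¹` satisfies `A D₁ = I` and `B D₁ = 0`. -/
theorem stmt16 (p q T : ℕ)
    (A : Matrix (Fin p) (Fin T) ℝ) (B : Matrix (Fin q) (Fin T) ℝ)
    (hrank : (Matrix.fromRows A B).rank = p + q) :
    IsUnit (1 - A * rpinv B * B * rpinv A) ∧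
    A * ((1 - rpinv B * B) * rpinv A * (1 - A * rpinv B * B * rpinv A)⁻¹) = 1 ∧
    B * ((1 - rpinv B * B) * rpinv A * (1 - A * rpinv B * B * rpinv A)⁻¹) = 0 := by
  have hF : Function.Injective (fromRows A B).vecMul :=
    (rank_eq_card_iff_vecMul_injective _).mp (by simpa using hrank)
  have hA := mul_rpinv_of_vecMul_injective (vecMul_injective_left_of_fromRows hF)
  have hB := mul_rpinv_of_vecMul_injective (vecMul_injective_right_of_fromRows hF)
  have hM : 1 - A * rpinv B * B * rpinv A = A * (1 - rpinv B * B) * rpinv A := by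
    rw [Matrix.mul_sub, Matrix.mul_one, Matrix.sub_mul, hA, Matrix.mul_assoc A (rpinv B) B,
      ← Matrix.mul_assoc]
  have hMu : IsUnit (1 - A * rpinv B * B * rpinv A) :=
    hM ▸ isUnit_mul_one_sub_rpinv_mul_self_mul_rpinv hF
  refine ⟨hMu, ?_, ?_⟩
  · rw [← Matrix.mul_assoc, ← Matrix.mul_assoc, ← hM,
      mul_nonsing_inv _ ((isUnit_iff_isUnit_det _).mp hMu)]
  · rw [← Matrix.mul_assoc, ← Matrix.mul_assoc, mul_one_sub_rpinv_mul_self hB,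
      Matrix.zero_mul, Matrix.zero_mul]
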